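/- arXiv:2510.21951 — 6 statements merged into one kernel-verified Lean document; each statement's English description precedes it below -/
import Mathlib

section
/- For fixed F ∈ [0,1), the function H(F,π) = (π-C)(1-F)·e^{p+qF-π}/(1+e^{p+qF-π}) of π ∈ ℝ attains a unique global maximum at π* = C + 1 + W(e^{p+qF-(C+1)}), where W is the principal branch of the Lambert W function. -/
/-!
Shift prices by the cost, `x = π - C`, and put `b = p + q F - C`, `E = exp (b - x)`. Then
`H = (1 - F) · x E / (1 + E)`, and `x E / (1 + E) < w` means `x E < w + w E`. The Lambert
equation `w e^w = e^(b-1)` gives `w = e^(x-1-w) E`, so after dividing by `E` the claim is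
`x < w + e^(x-1-w)`: the strict tangent-line bound `t + 1 < e^t` at `t = x - 1 - w ≠ 0`.
-/

noncomputable section

/-- Single-period profit. -/
def H (C p q F π : ℝ) : ℝ :=
  (π - C) * (1 - F) * (Real.exp (p + q * F - π) / (1 + Real.exp (p + q * F - π)))

section LogisticRevenue

open Real

lemma exp_sub_eq_of_mul_exp_eq {w c : ℝ} (hw : w * exp w = exp c) : exp (c - w) = w := by
  rw [exp_sub, ← hw, mul_div_cancel_right₀ _ (exp_ne_zero w)]

variable {b w x : ℝ}

lemma pos_of_mul_exp_eq_exp (hw : w * exp w = exp (b - 1)) : 0 < w :=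
  pos_of_mul_pos_left (hw ▸ exp_pos _) (exp_pos w).le

lemma mul_exp_div_one_add_exp_of_eq (hw : w * exp w = exp (b - 1)) :
    (1 + w) * (exp (b - (1 + w)) / (1 + exp (b - (1 + w)))) = w := by
  have hw0 := pos_of_mul_exp_eq_exp hw
  rw [show b - (1 + w) = b - 1 - w by ring, exp_sub_eq_of_mul_exp_eq hw]
  field_simp

lemma mul_exp_div_one_add_exp_lt (hw : w * exp w = exp (b - 1)) (hx : x ≠ 1 + w) :
    x * (exp (b - x) / (1 + exp (b - x))) < w := by
  set E := exp (b - x)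
  have hE : 0 < E := exp_pos _
  have tangent : x < w + exp (x - 1 - w) := by
    linarith [add_one_lt_exp (by contrapose! hx; linarith : x - 1 - w ≠ 0)]
  have lambert : exp (x - 1 - w) * E = w := by
    rw [← exp_add, show x - 1 - w + (b - x) = b - 1 - w by ring, exp_sub_eq_of_mul_exp_eq hw]
  rw [mul_div_assoc', div_lt_iff₀ (by positivity)]
  calc x * E < (w + exp (x - 1 - w)) * E := mul_lt_mul_of_pos_right tangent hE
    _ = w * (1 + E) := by rw [add_mul, lambert]; ring

end LogisticRevenue

lemma H_eq_mul (C p q F π : ℝ) :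
    H C p q F π = (1 - F) *
      ((π - C) * (Real.exp (p + q * F - C - (π - C)) /
        (1 + Real.exp (p + q * F - C - (π - C))))) := by
  rw [H, show p + q * F - C - (π - C) = p + q * F - π by ring]
  ring

theorem stmt_2_general (C p q : ℝ)
    (W : ℝ → ℝ) (hW : ∀ z : ℝ, 0 ≤ z → 0 ≤ W z ∧ W z * Real.exp (W z) = z)
    (F : ℝ) (hF : F ∈ Set.Ico (0:ℝ) 1) :
    ∀ π : ℝ, π ≠ C + 1 + W (Real.exp (p + q * F - (C + 1))) →
      H C p q F π < H C p q F (C + 1 + W (Real.exp (p + q * F - (C + 1)))) := by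
  intro π hπ
  set w := W (Real.exp (p + q * F - (C + 1)))
  have hw : w * Real.exp w = Real.exp (p + q * F - C - 1) := by
    rw [sub_sub]
    exact (hW _ (Real.exp_pos _).le).2
  have hF1 : 0 < 1 - F := sub_pos.mpr hF.2
  rw [H_eq_mul, H_eq_mul, show C + 1 + w - C = 1 + w by ring, mul_exp_div_one_add_exp_of_eq hw]
  exact mul_lt_mul_of_pos_left (mul_exp_div_one_add_exp_lt hw (by contrapose! hπ; linarith)) hF1

/-- For fixed `F ∈ [0,1)`, the single-period profit `H` attains a unique global maximum
at `π* = C + 1 + W (exp (p + q F - (C+1)))`, where `W` is the principal branch of the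
Lambert W function. -/
theorem stmt_2 (C p q : ℝ) (hC : 0 ≤ C) (hp : 0 ≤ p) (hq : 0 ≤ q)
    (W : ℝ → ℝ) (hW : ∀ z : ℝ, 0 ≤ z → 0 ≤ W z ∧ W z * Real.exp (W z) = z)
    (F : ℝ) (hF : F ∈ Set.Ico (0:ℝ) 1) :
    ∀ π : ℝ, π ≠ C + 1 + W (Real.exp (p + q * F - (C + 1))) →
      H C p q F π < H C p q F (C + 1 + W (Real.exp (p + q * F - (C + 1)))) :=
  stmt_2_general C p q W hW F hF
end
end

section
/- The optimal single-period price π*(F) = C + 1 + W(e^{p+qF-(C+1)}) is strictly positive, strictly increasing in F, strictly increasing in p, strictly increasing in C, and satisfies ∂π*/∂C = 1/(1 + W(e^{p+qF-(C+1)})) ∈ (0,1). -/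
/-!
Write `L` for the inverse of the increasing bijection `s ↦ s + eˢ` of `ℝ`. If `w e^w = eˣ`,
then `log w + w = x`, so `W(eˣ) = e^{L x}`; monotonicity in `F` and `p` follows from that
of `L`. Since `e^{L u} = u - L u`, the price with `a = p + qF` becomes
`c + 1 + W(e^{a-(c+1)}) = a - L(a - (c+1))`, which is increasing in `c` with derivative
`L'(a - (c+1)) = 1/(1 + e^{L(a-(c+1))})` by the inverse function theorem.
-/

open Real Filter

lemma strictMono_add_exp : StrictMono fun s : ℝ => s + exp s :=
  fun _ _ h => add_lt_add h (exp_lt_exp.2 h)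

lemma surjective_add_exp : Function.Surjective fun s : ℝ => s + exp s :=
  Continuous.surjective (by fun_prop) (tendsto_id.atTop_add_atTop tendsto_exp_atTop)
    (by simpa using tendsto_id.atBot_add tendsto_exp_atBot)

noncomputable def addExpOrderIso : ℝ ≃o ℝ :=
  StrictMono.orderIsoOfSurjective _ strictMono_add_exp surjective_add_exp

/-- The logarithm of the Wright omega function `ω(x) = W(eˣ)`. -/
noncomputable def logWrightOmega (x : ℝ) : ℝ := addExpOrderIso.symm x

lemma logWrightOmega_add_exp (x : ℝ) : logWrightOmega x + exp (logWrightOmega x) = x :=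
  addExpOrderIso.apply_symm_apply x

lemma logWrightOmega_eq_of_add_exp {s x : ℝ} (h : s + exp s = x) : logWrightOmega x = s :=
  h ▸ addExpOrderIso.symm_apply_apply s

lemma exp_logWrightOmega (x : ℝ) : exp (logWrightOmega x) = x - logWrightOmega x := by
  linarith [logWrightOmega_add_exp x]

lemma logWrightOmega_strictMono : StrictMono logWrightOmega :=
  addExpOrderIso.symm.strictMono

lemma hasDerivAt_logWrightOmega (x : ℝ) :
    HasDerivAt logWrightOmega (1 + exp (logWrightOmega x))⁻¹ x :=
  HasDerivAt.of_local_left_inverse addExpOrderIso.symm.continuous.continuousAt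
    ((hasDerivAt_id _).add (hasDerivAt_exp _)) (by positivity)
    (Eventually.of_forall logWrightOmega_add_exp)

lemma hasDerivAt_sub_logWrightOmega_sub (a c : ℝ) :
    HasDerivAt (fun y => a - logWrightOmega (a - y)) (1 + exp (logWrightOmega (a - c)))⁻¹ c := by
  simpa using
    ((hasDerivAt_logWrightOmega (a - c)).comp c ((hasDerivAt_id c).const_sub a)).const_sub a

lemma eq_exp_logWrightOmega {w x : ℝ} (h : w * exp w = exp x) :
    w = exp (logWrightOmega x) := by
  have hw_pos : 0 < w := pos_of_mul_pos_left (h ▸ exp_pos x) (exp_pos w).le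
  have hlog : logWrightOmega x = log w := logWrightOmega_eq_of_add_exp <| by
    rw [exp_log hw_pos, ← log_exp x, ← h, log_mul hw_pos.ne' (exp_pos w).ne', log_exp]
  rw [hlog, exp_log hw_pos]

lemma add_exp_logWrightOmega_sub (a c : ℝ) :
    c + exp (logWrightOmega (a - c)) = a - logWrightOmega (a - c) := by
  rw [exp_logWrightOmega]; ring

theorem stmt_5_general (C p q : ℝ) (hC : 0 ≤ C) (hq : 0 < q)
    (W : ℝ → ℝ) (hW : ∀ z : ℝ, 0 ≤ z → 0 ≤ W z ∧ W z * Real.exp (W z) = z)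
    (F : ℝ) :
    (0 < C + 1 + W (Real.exp (p + q * F - (C + 1)))) ∧
    (∀ F₁ ∈ Set.Icc (0:ℝ) 1, ∀ F₂ ∈ Set.Icc (0:ℝ) 1, F₁ < F₂ →
      C + 1 + W (Real.exp (p + q * F₁ - (C + 1))) <
        C + 1 + W (Real.exp (p + q * F₂ - (C + 1)))) ∧
    (∀ p₁ p₂ : ℝ, 0 ≤ p₁ → p₁ < p₂ →
      C + 1 + W (Real.exp (p₁ + q * F - (C + 1))) <
        C + 1 + W (Real.exp (p₂ + q * F - (C + 1)))) ∧
    (∀ C₁ C₂ : ℝ, 0 ≤ C₁ → C₁ < C₂ →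
      C₁ + 1 + W (Real.exp (p + q * F - (C₁ + 1))) <
        C₂ + 1 + W (Real.exp (p + q * F - (C₂ + 1)))) ∧
    HasDerivAt (fun c : ℝ => c + 1 + W (Real.exp (p + q * F - (c + 1))))
      (1 / (1 + W (Real.exp (p + q * F - (C + 1))))) C ∧
    1 / (1 + W (Real.exp (p + q * F - (C + 1)))) ∈ Set.Ioo (0:ℝ) 1 := by
  have hW_exp (x : ℝ) : W (exp x) = exp (logWrightOmega x) :=
    eq_exp_logWrightOmega (hW _ (exp_pos x).le).2
  have hW_exp_mono : StrictMono fun x => W (exp x) := by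
    simp only [hW_exp]
    exact exp_strictMono.comp logWrightOmega_strictMono
  have hprice (c : ℝ) :
      c + 1 + W (exp (p + q * F - (c + 1))) = p + q * F - logWrightOmega (p + q * F - (c + 1)) := by
    rw [hW_exp, add_exp_logWrightOmega_sub]
  refine ⟨?_, ?_, ?_, ?_, ?_, ?_⟩
  · rw [hW_exp]; positivity
  · intro F₁ _ F₂ _ hF
    have : p + q * F₁ - (C + 1) < p + q * F₂ - (C + 1) := by gcongr
    exact add_lt_add_right (hW_exp_mono this) _
  · intro p₁ p₂ _ hp
    have : p₁ + q * F - (C + 1) < p₂ + q * F - (C + 1) := by gcongr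
    exact add_lt_add_right (hW_exp_mono this) _
  · intro C₁ C₂ _ hC₁₂
    rw [hprice, hprice]
    exact sub_lt_sub_left (logWrightOmega_strictMono (by gcongr)) _
  · rw [funext hprice, hW_exp, one_div]
    exact (hasDerivAt_sub_logWrightOmega_sub (p + q * F) (C + 1)).comp_add_const C 1
  · rw [hW_exp]
    exact ⟨by positivity, (div_lt_one (by positivity)).2 (lt_add_of_pos_right 1 (exp_pos _))⟩

/-- Properties of the optimal single-period price
`π*(C,p,F) = C + 1 + W(e^{p+qF-(C+1)})`: strictly positive, strictly increasing in `F`,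
in `p`, and in `C`, with `∂π*/∂C = 1/(1+W(e^{p+qF-(C+1)})) ∈ (0,1)`. -/
theorem stmt_5 (C p q : ℝ) (hC : 0 ≤ C) (hp : 0 ≤ p) (hq : 0 < q)
    (W : ℝ → ℝ) (hW : ∀ z : ℝ, 0 ≤ z → 0 ≤ W z ∧ W z * Real.exp (W z) = z)
    (F : ℝ) (hF : F ∈ Set.Icc (0:ℝ) 1) :
    (0 < C + 1 + W (Real.exp (p + q * F - (C + 1)))) ∧
    (∀ F₁ ∈ Set.Icc (0:ℝ) 1, ∀ F₂ ∈ Set.Icc (0:ℝ) 1, F₁ < F₂ →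
      C + 1 + W (Real.exp (p + q * F₁ - (C + 1))) <
        C + 1 + W (Real.exp (p + q * F₂ - (C + 1)))) ∧
    (∀ p₁ p₂ : ℝ, 0 ≤ p₁ → p₁ < p₂ →
      C + 1 + W (Real.exp (p₁ + q * F - (C + 1))) <
        C + 1 + W (Real.exp (p₂ + q * F - (C + 1)))) ∧
    (∀ C₁ C₂ : ℝ, 0 ≤ C₁ → C₁ < C₂ →
      C₁ + 1 + W (Real.exp (p + q * F - (C₁ + 1))) <
        C₂ + 1 + W (Real.exp (p + q * F - (C₂ + 1)))) ∧
    HasDerivAt (fun c : ℝ => c + 1 + W (Real.exp (p + q * F - (c + 1))))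
      (1 / (1 + W (Real.exp (p + q * F - (C + 1))))) C ∧
    1 / (1 + W (Real.exp (p + q * F - (C + 1)))) ∈ Set.Ioo (0:ℝ) 1 :=
  stmt_5_general C p q hC hq W hW F
end

section
/- The maximal single-period profit equals V(F) = (1-F)·W(e^{p+qF-(C+1)}), i.e., substituting π*(F) = C+1+W(e^{p+qF-(C+1)}) into H(F,π) = (π-C)(1-F)e^{p+qF-π}/(1+e^{p+qF-π}) yields (1-F)·W(e^{p+qF-(C+1)}). -/
noncomputable section

theorem Real.exp_sub_eq_of_mul_exp_eq {a w : ℝ} (h : w * Real.exp w = Real.exp a) :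
    Real.exp (a - w) = w := by
  rw [Real.exp_sub, ← h, mul_div_cancel_right₀ _ (Real.exp_pos w).ne']

/-- Under the first-order condition `e^{p+qF-π} = π - C - 1` the logit factor of `H` becomes
`(π - C - 1) / (π - C)`, cancelling the margin `π - C`. -/
theorem H_eq_of_exp_eq {C p q F π : ℝ} (h : Real.exp (p + q * F - π) = π - C - 1) :
    H C p q F π = (1 - F) * (π - C - 1) := by
  have hπ : π - C ≠ 0 := fun h0 => by linarith [Real.exp_pos (p + q * F - π)]
  unfold H
  rw [h, show 1 + (π - C - 1) = π - C by ring]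
  field_simp

theorem stmt_6_general (C p q : ℝ)
    (W : ℝ → ℝ) (hW : ∀ z : ℝ, 0 ≤ z → 0 ≤ W z ∧ W z * Real.exp (W z) = z)
    (F : ℝ) :
    H C p q F (C + 1 + W (Real.exp (p + q * F - (C + 1)))) =
      (1 - F) * W (Real.exp (p + q * F - (C + 1))) := by
  set w := W (Real.exp (p + q * F - (C + 1)))
  have hw : Real.exp (p + q * F - (C + 1 + w)) = w := by
    rw [← sub_sub]
    exact Real.exp_sub_eq_of_mul_exp_eq (hW _ (Real.exp_pos _).le).2
  rw [H_eq_of_exp_eq (by rw [hw]; ring)]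
  ring

/-- Substituting the optimal price `π*(F) = C+1+W(e^{p+qF-(C+1)})` into `H`
yields the maximal single-period profit `(1-F)·W(e^{p+qF-(C+1)})`. -/
theorem stmt_6 (C p q : ℝ) (hC : 0 ≤ C)
    (W : ℝ → ℝ) (hW : ∀ z : ℝ, 0 ≤ z → 0 ≤ W z ∧ W z * Real.exp (W z) = z)
    (F : ℝ) (hF : F ∈ Set.Icc (0:ℝ) 1) :
    H C p q F (C + 1 + W (Real.exp (p + q * F - (C + 1)))) =
      (1 - F) * W (Real.exp (p + q * F - (C + 1))) :=
  stmt_6_general C p q W hW F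
end
end

section
/- If 0 ≤ q ≤ 1 then V(F) = (1-F)·W(e^{p+qF-(C+1)}) is concave on [0,1]; specifically V''(F) = [W q / (1+W)^3]·[(1-F)q - 2(1+W)^2] ≤ 0, where W = W(e^{p+qF-(C+1)}). -/
/-!
On `(0, ∞)`, `W` is monotone with image `(0, ∞)`, hence continuous, and a local inverse of
`w ↦ w e^w`, hence differentiable. Implicit differentiation of `W e^W = z` gives `W' = W / (z (1 + W))`, so `A(F) = W(e^{p+qF-(C+1)})`
solves `A' = q A / (1 + A)`. Differentiating `V = (1 - F) A` twice with this ODE yields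
`V'' = [A q / (1 + A)³] · [(1 - F) q - 2 (1 + A)²]`; the first factor is nonnegative and,
since `A > 0` and `(1 - F) q ≤ 1`, the second one is negative.
-/

open Real Set

/-- `W` is the principal branch of the Lambert function on `[0, ∞)`; its values at negative
arguments are left unconstrained. -/
def IsLambertW (W : ℝ → ℝ) : Prop :=
  ∀ z : ℝ, 0 ≤ z → 0 ≤ W z ∧ W z * exp (W z) = z

lemma strictMonoOn_mul_exp : StrictMonoOn (fun w : ℝ => w * exp w) (Ici 0) := by
  intro a ha b _ hab
  calc a * exp a ≤ a * exp b := mul_le_mul_of_nonneg_left (exp_le_exp.2 hab.le) ha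
    _ < b * exp b := mul_lt_mul_of_pos_right hab (exp_pos b)

namespace IsLambertW

variable {W : ℝ → ℝ} (hW : IsLambertW W)
include hW

lemma apply_mul_exp {w : ℝ} (hw : 0 ≤ w) : W (w * exp w) = w :=
  strictMonoOn_mul_exp.injOn (hW _ (by positivity)).1 hw (hW _ (by positivity)).2

lemma pos {z : ℝ} (hz : 0 < z) : 0 < W z := by
  obtain ⟨hW0, hWz⟩ := hW z hz.le
  refine hW0.lt_of_ne fun h => hz.ne ?_
  rw [← hWz, ← h, zero_mul]

lemma monotoneOn : MonotoneOn W (Ici 0) := by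
  intro y₁ hy₁ y₂ hy₂ hy
  rw [← strictMonoOn_mul_exp.le_iff_le (hW y₁ hy₁).1 (hW y₂ hy₂).1]
  simpa only [(hW y₁ hy₁).2, (hW y₂ hy₂).2] using hy

lemma image_Ioi : W '' Ioi 0 = Ioi 0 := by
  refine Subset.antisymm (fun _ ⟨z, hz, hWz⟩ => hWz ▸ hW.pos hz) fun w hw => ?_
  exact ⟨w * exp w, mul_pos hw (exp_pos w), hW.apply_mul_exp (le_of_lt hw)⟩

lemma continuousAt {z : ℝ} (hz : 0 < z) : ContinuousAt W z := by
  refine continuousAt_of_monotoneOn_of_image_mem_nhds (hW.monotoneOn.mono Ioi_subset_Ici_self)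
    (Ioi_mem_nhds hz) ?_
  rw [hW.image_Ioi]
  exact Ioi_mem_nhds (hW.pos hz)

lemma hasDerivAt {z : ℝ} (hz : 0 < z) : HasDerivAt W ((1 + W z) * exp (W z))⁻¹ z := by
  have hg : HasDerivAt (fun w : ℝ => w * exp w) ((1 + W z) * exp (W z)) (W z) := by
    exact ((hasDerivAt_id' (W z)).mul (hasDerivAt_exp (W z))).congr_deriv (by ring)
  refine hg.of_local_left_inverse (hW.continuousAt hz)
    (mul_pos (by linarith [hW.pos hz]) (exp_pos _)).ne' ?_
  filter_upwards [Ioi_mem_nhds hz] with y hy using (hW y (le_of_lt hy)).2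

lemma hasDerivAt_comp_exp {u : ℝ → ℝ} {u' x : ℝ} (hu : HasDerivAt u u' x) :
    HasDerivAt (fun x => W (exp (u x)))
      (u' * W (exp (u x)) / (1 + W (exp (u x)))) x := by
  have hWexp := (hW _ (exp_pos (u x)).le).2
  have : 1 + W (exp (u x)) ≠ 0 := by linarith [hW.pos (exp_pos (u x))]
  refine ((hW.hasDerivAt (exp_pos (u x))).comp x hu.exp).congr_deriv ?_
  field_simp
  linear_combination -u' * hWexp

end IsLambertW

section OneMinusMul

variable {A : ℝ → ℝ} {q : ℝ}
  (hA : ∀ x, HasDerivAt A (q * A x / (1 + A x)) x) (hA₁ : ∀ x, 1 + A x ≠ 0)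
include hA

lemma hasDerivAt_one_sub_mul (x : ℝ) :
    HasDerivAt (fun x => (1 - x) * A x) (-A x + (1 - x) * (q * A x / (1 + A x))) x := by
  exact (((hasDerivAt_id' x).const_sub 1).mul (hA x)).congr_deriv (by ring)

lemma deriv_one_sub_mul :
    deriv (fun x => (1 - x) * A x) = fun x => -A x + (1 - x) * (q * A x / (1 + A x)) :=
  funext fun x => (hasDerivAt_one_sub_mul hA x).deriv

include hA₁

lemma hasDerivAt_deriv_one_sub_mul (x : ℝ) :
    HasDerivAt (deriv fun x => (1 - x) * A x)
      (A x * q / (1 + A x) ^ 3 * ((1 - x) * q - 2 * (1 + A x) ^ 2)) x := by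
  rw [deriv_one_sub_mul hA]
  refine ((hA x).neg.add (((hasDerivAt_id' x).const_sub 1).mul
    (((hA x).const_mul q).div ((hA x).const_add 1) (hA₁ x)))).congr_deriv ?_
  have := hA₁ x
  simp only [Pi.div_apply]
  field_simp
  ring

lemma deriv_deriv_one_sub_mul (x : ℝ) :
    deriv (deriv fun x => (1 - x) * A x) x =
      A x * q / (1 + A x) ^ 3 * ((1 - x) * q - 2 * (1 + A x) ^ 2) :=
  (hasDerivAt_deriv_one_sub_mul hA hA₁ x).deriv

end OneMinusMul

lemma second_deriv_factor_nonpos {w q F : ℝ} (hw : 0 ≤ w) (hq₀ : 0 ≤ q) (hq₁ : q ≤ 1)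
    (hF : F ∈ Icc (0 : ℝ) 1) :
    w * q / (1 + w) ^ 3 * ((1 - F) * q - 2 * (1 + w) ^ 2) ≤ 0 := by
  obtain ⟨hF₀, hF₁⟩ := hF
  refine mul_nonpos_of_nonneg_of_nonpos (by positivity) ?_
  nlinarith [mul_le_mul hq₁ (sub_le_self 1 hF₀) (sub_nonneg.2 hF₁) zero_le_one]

theorem stmt_8_general (C p q : ℝ) (hq0 : 0 ≤ q) (hq1 : q ≤ 1)
    (W : ℝ → ℝ) (hW : ∀ z : ℝ, 0 ≤ z → 0 ≤ W z ∧ W z * Real.exp (W z) = z) :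
    ConcaveOn ℝ (Set.Icc (0:ℝ) 1)
      (fun F : ℝ => (1 - F) * W (Real.exp (p + q * F - (C + 1)))) ∧
    ∀ F ∈ Set.Icc (0:ℝ) 1,
      deriv (deriv (fun x : ℝ => (1 - x) * W (Real.exp (p + q * x - (C + 1))))) F =
        (W (Real.exp (p + q * F - (C + 1))) * q /
          (1 + W (Real.exp (p + q * F - (C + 1)))) ^ 3) *
          ((1 - F) * q - 2 * (1 + W (Real.exp (p + q * F - (C + 1)))) ^ 2) ∧
      (W (Real.exp (p + q * F - (C + 1))) * q /
          (1 + W (Real.exp (p + q * F - (C + 1)))) ^ 3) *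
          ((1 - F) * q - 2 * (1 + W (Real.exp (p + q * F - (C + 1)))) ^ 2) ≤ 0 := by
  have hW' : IsLambertW W := hW
  have hA_pos (x : ℝ) : 0 < W (exp (p + q * x - (C + 1))) := hW'.pos (exp_pos _)
  have hA (x : ℝ) := hW'.hasDerivAt_comp_exp (u := fun x => p + q * x - (C + 1))
    ((((hasDerivAt_id' x).const_mul q).const_add p).sub_const (C + 1) |>.congr_deriv (mul_one q))
  have hA₁ (x : ℝ) : 1 + W (exp (p + q * x - (C + 1))) ≠ 0 := by linarith [hA_pos x]
  have hV'' := deriv_deriv_one_sub_mul hA hA₁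
  have hsign (F : ℝ) (hF : F ∈ Icc (0 : ℝ) 1) :=
    second_deriv_factor_nonpos (hA_pos F).le hq0 hq1 hF
  refine ⟨concaveOn_of_deriv2_nonpos' (convex_Icc 0 1) ?_ ?_ ?_, fun F hF => ⟨hV'' F, hsign F hF⟩⟩
  · exact fun x _ => (hasDerivAt_one_sub_mul hA x).differentiableAt.differentiableWithinAt
  · exact fun x _ => (hasDerivAt_deriv_one_sub_mul hA hA₁ x).differentiableAt.differentiableWithinAt
  · intro x hx
    rw [Function.iterate_succ_apply, Function.iterate_one, hV'' x]
    exact hsign x hx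

/-- If `0 ≤ q ≤ 1` then `V(F) = (1-F)·W(e^{p+qF-(C+1)})` is concave on `[0,1]`, and its
second derivative equals `[Wq/(1+W)³]·[(1-F)q - 2(1+W)²] ≤ 0` with
`W = W(e^{p+qF-(C+1)})`. -/
theorem stmt_8 (C p q : ℝ) (hC : 0 ≤ C) (hq0 : 0 ≤ q) (hq1 : q ≤ 1)
    (W : ℝ → ℝ) (hW : ∀ z : ℝ, 0 ≤ z → 0 ≤ W z ∧ W z * Real.exp (W z) = z) :
    ConcaveOn ℝ (Set.Icc (0:ℝ) 1)
      (fun F : ℝ => (1 - F) * W (Real.exp (p + q * F - (C + 1)))) ∧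
    ∀ F ∈ Set.Icc (0:ℝ) 1,
      deriv (deriv (fun x : ℝ => (1 - x) * W (Real.exp (p + q * x - (C + 1))))) F =
        (W (Real.exp (p + q * F - (C + 1))) * q /
          (1 + W (Real.exp (p + q * F - (C + 1)))) ^ 3) *
          ((1 - F) * q - 2 * (1 + W (Real.exp (p + q * F - (C + 1)))) ^ 2) ∧
      (W (Real.exp (p + q * F - (C + 1))) * q /
          (1 + W (Real.exp (p + q * F - (C + 1)))) ^ 3) *
          ((1 - F) * q - 2 * (1 + W (Real.exp (p + q * F - (C + 1)))) ^ 2) ≤ 0 :=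
  stmt_8_general C p q hq0 hq1 W hW
end

section
/- In the single-period Stackelberg game with β ≥ β_0 := (1 + W(e^{p+qF_0-(C+1)}))^{-2}, the policymaker's objective V^p(r) = (1-F_0)·R(F_0, π*(r), r)·(1 - βr) is nonincreasing on r ≥ 0, so the optimal rebate is r* = 0; if 0 < β < β_0, then V^p has a unique maximizer r* > 0, characterized by 1/β = r* + (1 + W(e^{p+qF_0+r*-(C+1)}))². -/
/-!
Write `g r = W(e^{u+r})` with `u = p + qF₀ - (C+1)`. Then `g` solves `log g + g = u + r`, so it is
an increasing bijection `ℝ → (0,∞)` with `g' = g/(1+g)`, and the objective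
`V(r) = c(1-βr)·g/(1+g)`, `c = 1 - F₀`, has derivative `c·g/(1+g)³·(1 - β(r + (1+g)²))`. Since
`r + (1+g r)²` is strictly increasing, the sign of `V'` changes at most once, from `+` to `-`,
exactly where `β(r + (1+g r)²) = 1`. Whether this crossing lies to the right of `0` is decided by
comparing `β` with `β₀ = (1+g 0)⁻²`.
-/

open Real Set Filter

section SignChange

variable {V k φ : ℝ → ℝ}

theorem monotoneOn_Iic_of_hasDerivAt_mul {b : ℝ} (hV : ∀ r, HasDerivAt V (k r * φ r) r)
    (hk : ∀ r, 0 ≤ k r) (hφ : Antitone φ) (hb : 0 ≤ φ b) : MonotoneOn V (Iic b) := by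
  refine monotoneOn_of_deriv_nonneg (convex_Iic b)
    (fun x _ => (hV x).continuousAt.continuousWithinAt)
    (fun x _ => (hV x).differentiableAt.differentiableWithinAt) fun x hx => ?_
  rw [interior_Iic] at hx
  rw [(hV x).deriv]
  exact mul_nonneg (hk x) (hb.trans (hφ hx.le))

theorem antitoneOn_Ici_of_hasDerivAt_mul {a : ℝ} (hV : ∀ r, HasDerivAt V (k r * φ r) r)
    (hk : ∀ r, 0 ≤ k r) (hφ : Antitone φ) (ha : φ a ≤ 0) : AntitoneOn V (Ici a) := by
  refine antitoneOn_of_deriv_nonpos (convex_Ici a)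
    (fun x _ => (hV x).continuousAt.continuousWithinAt)
    (fun x _ => (hV x).differentiableAt.differentiableWithinAt) fun x hx => ?_
  rw [interior_Ici] at hx
  rw [(hV x).deriv]
  exact mul_nonpos_of_nonneg_of_nonpos (hk x) ((hφ hx.le).trans ha)

theorem isMaxOn_univ_of_hasDerivAt_mul {b : ℝ} (hV : ∀ r, HasDerivAt V (k r * φ r) r)
    (hk : ∀ r, 0 ≤ k r) (hφ : Antitone φ) (hb : φ b = 0) : IsMaxOn V univ b := by
  intro x _
  rcases le_total x b with hxb | hbx
  · exact monotoneOn_Iic_of_hasDerivAt_mul hV hk hφ hb.ge hxb self_mem_Iic hxb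
  · exact antitoneOn_Ici_of_hasDerivAt_mul hV hk hφ hb.le self_mem_Ici hbx hbx

end SignChange

section ShiftedLambert

variable {u : ℝ} {g : ℝ → ℝ}

theorem log_add_self_of_mul_exp_eq {w z : ℝ} (hw : 0 < w) (h : w * exp w = z) :
    log w + w = log z := by
  rw [← h, log_mul hw.ne' (exp_ne_zero w), log_exp]

theorem strictMonoOn_log_add_self : StrictMonoOn (fun w => log w + w) (Ioi 0) :=
  fun _ ha _ _ hab => add_lt_add (log_lt_log ha hab) hab

theorem strictMono_of_log_add_self_eq (hg_pos : ∀ r, 0 < g r)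
    (hg : ∀ r, log (g r) + g r = u + r) : StrictMono g := by
  refine fun a b hab => lt_of_not_ge fun hba => ?_
  have := strictMonoOn_log_add_self.monotoneOn (hg_pos b) (hg_pos a) hba
  simp only [hg] at this
  linarith

theorem range_eq_Ioi_of_log_add_self_eq (hg_pos : ∀ r, 0 < g r)
    (hg : ∀ r, log (g r) + g r = u + r) : range g = Ioi 0 := by
  refine Subset.antisymm (range_subset_iff.2 hg_pos) fun w hw => ⟨log w + w - u, ?_⟩
  refine strictMonoOn_log_add_self.injOn (hg_pos _) hw ?_
  simp only [hg]
  ring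

theorem continuous_of_log_add_self_eq (hg_pos : ∀ r, 0 < g r)
    (hg : ∀ r, log (g r) + g r = u + r) : Continuous g := by
  refine continuous_iff_continuousAt.2 fun a => ?_
  refine StrictMonoOn.continuousAt_of_image_mem_nhds (s := univ)
    ((strictMono_of_log_add_self_eq hg_pos hg).strictMonoOn univ) univ_mem ?_
  rw [image_univ, range_eq_Ioi_of_log_add_self_eq hg_pos hg]
  exact Ioi_mem_nhds (hg_pos a)

theorem hasDerivAt_of_log_add_self_eq (hg_pos : ∀ r, 0 < g r)
    (hg : ∀ r, log (g r) + g r = u + r) (r : ℝ) : HasDerivAt g (g r / (1 + g r)) r := by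
  have hgr := hg_pos r
  have hf : HasDerivAt (fun w => log w + w - u) ((g r)⁻¹ + 1) (g r) := by
    simpa using ((hasDerivAt_log hgr.ne').add (hasDerivAt_id (g r))).sub_const u
  refine (hf.of_local_left_inverse (continuous_of_log_add_self_eq hg_pos hg).continuousAt
    (by positivity) (Eventually.of_forall fun y => by simp only [hg]; ring)).congr_deriv ?_
  field_simp

end ShiftedLambert

theorem hasDerivAt_rebate_objective {g : ℝ → ℝ} {c β r : ℝ}
    (hg : HasDerivAt g (g r / (1 + g r)) r) (hg_ne : 1 + g r ≠ 0) :
    HasDerivAt (fun s => c * (1 - β * s) * (g s / (1 + g s)))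
      (c * (g r / (1 + g r) ^ 3) * (1 - β * (r + (1 + g r) ^ 2))) r := by
  have hlin : HasDerivAt (fun s => c * (1 - β * s)) (c * (0 - β * 1)) r :=
    ((hasDerivAt_const r 1).sub ((hasDerivAt_id r).const_mul β)).const_mul c
  refine (hlin.mul (hg.div (hg.const_add 1) hg_ne)).congr_deriv ?_
  simp only [Pi.div_apply]
  field_simp
  ring

theorem strictMono_add_one_add_sq {g : ℝ → ℝ} (hg_mono : Monotone g)
    (hg_nonneg : ∀ r, 0 ≤ g r) :
    StrictMono fun r => r + (1 + g r) ^ 2 :=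
  strictMono_id.add_monotone fun a b hab =>
    pow_le_pow_left₀ (by linarith [hg_nonneg a]) (by linarith [hg_mono hab]) 2

theorem rebate_optimality {u c β : ℝ} {g : ℝ → ℝ} (hc : 0 ≤ c) (hβ : 0 < β)
    (hg_pos : ∀ r, 0 < g r) (hg : ∀ r, log (g r) + g r = u + r) :
    ((1 + g 0)⁻¹ ^ 2 ≤ β →
      AntitoneOn (fun r => c * (1 - β * r) * (g r / (1 + g r))) (Ici 0) ∧
      IsMaxOn (fun r => c * (1 - β * r) * (g r / (1 + g r))) (Ici 0) 0) ∧
    (β < (1 + g 0)⁻¹ ^ 2 →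
      ∃! r : ℝ, 0 < r ∧
        IsMaxOn (fun s => c * (1 - β * s) * (g s / (1 + g s))) (Ici 0) r ∧
        1 / β = r + (1 + g r) ^ 2) := by
  set h : ℝ → ℝ := fun r => r + (1 + g r) ^ 2
  have hh_mono : StrictMono h := strictMono_add_one_add_sq
    (strictMono_of_log_add_self_eq hg_pos hg).monotone fun r => (hg_pos r).le
  have hV := fun r => hasDerivAt_rebate_objective (c := c) (β := β)
    (hasDerivAt_of_log_add_self_eq hg_pos hg r) (by linarith [hg_pos r])
  have hk : ∀ r, 0 ≤ c * (g r / (1 + g r) ^ 3) := fun r => by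
    have := hg_pos r
    positivity
  have hφ : Antitone fun r => 1 - β * h r := fun a b hab => by
    have := mul_le_mul_of_nonneg_left (hh_mono.monotone hab) hβ.le
    linarith
  have hβ₀ : (1 + g 0)⁻¹ ^ 2 ≤ β ↔ 1 ≤ β * h 0 := by
    have : 0 < (1 + g 0) ^ 2 := by linarith [hg_pos 0, sq_nonneg (g 0)]
    rw [inv_pow, inv_le_iff_one_le_mul₀ this]
    simp only [h, zero_add]
  refine ⟨fun hβ_ge => ?_, fun hβ_lt => ?_⟩
  · have hanti := antitoneOn_Ici_of_hasDerivAt_mul hV hk hφ (a := 0)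
      (by linarith [hβ₀.1 hβ_ge])
    exact ⟨hanti, fun x hx => hanti self_mem_Ici hx hx⟩
  · have h0 : h 0 < 1 / β := by
      rw [lt_div_iff₀ hβ, mul_comm]
      exact lt_of_not_ge (mt hβ₀.2 (not_le.2 hβ_lt))
    have hcross : 1 / β ≤ h (1 / β) := le_add_of_nonneg_right (sq_nonneg _)
    have hh_cont : Continuous h :=
      continuous_id.add ((continuous_const.add (continuous_of_log_add_self_eq hg_pos hg)).pow 2)
    obtain ⟨r, -, hhr⟩ :=
      intermediate_value_Icc (by positivity) hh_cont.continuousOn ⟨h0.le, hcross⟩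
    have hr_pos : 0 < r := hh_mono.lt_iff_lt.1 (h0.trans_eq hhr.symm)
    have hmax := isMaxOn_univ_of_hasDerivAt_mul hV hk hφ (b := r) (by
      show 1 - β * h r = 0
      rw [hhr, mul_one_div_cancel hβ.ne', sub_self])
    refine ⟨r, ⟨hr_pos, hmax.on_subset (subset_univ _), hhr.symm⟩, fun s hs => ?_⟩
    exact hh_mono.injective (hs.2.2.symm.trans hhr.symm)

theorem stmt_17_general (C p q F₀ β : ℝ)
    (hF₀ : F₀ ∈ Set.Ico (0:ℝ) 1) (hβ : 0 < β)
    (W : ℝ → ℝ) (hW : ∀ z : ℝ, 0 ≤ z → 0 ≤ W z ∧ W z * Real.exp (W z) = z) :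
    ((1 + W (Real.exp (p + q * F₀ - (C + 1))))⁻¹ ^ 2 ≤ β →
      AntitoneOn
        (fun r : ℝ => (1 - F₀) * (1 - β * r) *
          (W (Real.exp (p + q * F₀ + r - (C + 1))) /
            (1 + W (Real.exp (p + q * F₀ + r - (C + 1))))))
        (Set.Ici (0:ℝ)) ∧
      IsMaxOn
        (fun r : ℝ => (1 - F₀) * (1 - β * r) *
          (W (Real.exp (p + q * F₀ + r - (C + 1))) /
            (1 + W (Real.exp (p + q * F₀ + r - (C + 1))))))
        (Set.Ici (0:ℝ)) 0) ∧
    (β < (1 + W (Real.exp (p + q * F₀ - (C + 1))))⁻¹ ^ 2 →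
      ∃! r : ℝ, 0 < r ∧
        IsMaxOn
          (fun s : ℝ => (1 - F₀) * (1 - β * s) *
            (W (Real.exp (p + q * F₀ + s - (C + 1))) /
              (1 + W (Real.exp (p + q * F₀ + s - (C + 1))))))
          (Set.Ici (0:ℝ)) r ∧
        1 / β = r + (1 + W (Real.exp (p + q * F₀ + r - (C + 1)))) ^ 2) := by
  set u := p + q * F₀ - (C + 1)
  have hshift : ∀ r, p + q * F₀ + r - (C + 1) = u + r := fun r => by ring
  have hg_pos : ∀ r, 0 < W (exp (u + r)) := fun r => by
    obtain ⟨hW_nonneg, hW_eq⟩ := hW _ (exp_pos (u + r)).le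
    refine hW_nonneg.lt_of_ne fun h0 => (exp_pos (u + r)).ne' ?_
    rw [← hW_eq, ← h0, zero_mul]
  have hg : ∀ r, log (W (exp (u + r))) + W (exp (u + r)) = u + r := fun r => by
    rw [log_add_self_of_mul_exp_eq (hg_pos r) (hW _ (exp_pos _).le).2, log_exp]
  have := rebate_optimality (c := 1 - F₀) (sub_nonneg.2 hF₀.2.le) hβ hg_pos hg
  simp only [hshift, add_zero] at this ⊢
  exact this

/-- Single-period Stackelberg game. With
`V^p(r) = (1-F₀)(1-βr)·W/(1+W)`, `W = W(e^{p+qF₀+r-(C+1)})` and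
`β₀ = (1+W(e^{p+qF₀-(C+1)}))⁻²`: if `β ≥ β₀` then `V^p` is nonincreasing on `[0,∞)` and
`r* = 0` is optimal; if `0 < β < β₀` then `V^p` has a unique maximizer `r* > 0` on
`[0,∞)`, characterized by `1/β = r* + (1+W(e^{p+qF₀+r*-(C+1)}))²`. -/
theorem stmt_17 (C p q F₀ β : ℝ) (hC : 0 ≤ C) (hp : 0 ≤ p) (hq : 0 ≤ q)
    (hF₀ : F₀ ∈ Set.Ico (0:ℝ) 1) (hβ : 0 < β)
    (W : ℝ → ℝ) (hW : ∀ z : ℝ, 0 ≤ z → 0 ≤ W z ∧ W z * Real.exp (W z) = z) :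
    ((1 + W (Real.exp (p + q * F₀ - (C + 1))))⁻¹ ^ 2 ≤ β →
      AntitoneOn
        (fun r : ℝ => (1 - F₀) * (1 - β * r) *
          (W (Real.exp (p + q * F₀ + r - (C + 1))) /
            (1 + W (Real.exp (p + q * F₀ + r - (C + 1))))))
        (Set.Ici (0:ℝ)) ∧
      IsMaxOn
        (fun r : ℝ => (1 - F₀) * (1 - β * r) *
          (W (Real.exp (p + q * F₀ + r - (C + 1))) /
            (1 + W (Real.exp (p + q * F₀ + r - (C + 1))))))
        (Set.Ici (0:ℝ)) 0) ∧
    (β < (1 + W (Real.exp (p + q * F₀ - (C + 1))))⁻¹ ^ 2 →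
      ∃! r : ℝ, 0 < r ∧
        IsMaxOn
          (fun s : ℝ => (1 - F₀) * (1 - β * s) *
            (W (Real.exp (p + q * F₀ + s - (C + 1))) /
              (1 + W (Real.exp (p + q * F₀ + s - (C + 1))))))
          (Set.Ici (0:ℝ)) r ∧
        1 / β = r + (1 + W (Real.exp (p + q * F₀ + r - (C + 1)))) ^ 2) :=
  stmt_17_general C p q F₀ β hF₀ hβ W hW
end

section
/- The equilibrium final adoption level F_1(r) = F_0 + (1-F_0)·W/(1+W), with W = W(e^{p+qF_0+r-(C+1)}), is strictly increasing in the rebate r; specifically dF_1/dr = (1-F_0)·W/(1+W)³ > 0 for F_0 < 1. In particular, any positive optimal rebate yields strictly higher final adoption than no rebate. -/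
/-!
Writing `W(eˣ) = e^{u(x)}`, the equation `W e^W = eˣ` becomes `e^u + u = x`, so `u` is the
inverse of the order isomorphism `t ↦ eᵗ + t` of `ℝ` and is differentiable with
`u' = 1 / (e^u + 1)`. Hence `(W ∘ exp)' = W / (1 + W)`, and the quotient rule gives
`(W / (1 + W))' = W / (1 + W)³ > 0`.
-/

open Real Filter

namespace Real

noncomputable def expAddSelfOrderIso : ℝ ≃o ℝ :=
  StrictMono.orderIsoOfSurjective (fun t => exp t + t)
    (exp_strictMono.add strictMono_id)
    ((continuous_exp.add continuous_id).surjective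
      (tendsto_exp_atTop.atTop_add_atTop tendsto_id)
      (tendsto_exp_atBot.add_atBot tendsto_id))

@[simp]
lemma expAddSelfOrderIso_apply (t : ℝ) : expAddSelfOrderIso t = exp t + t := by
  simp [expAddSelfOrderIso]

lemma hasDerivAt_expAddSelfOrderIso_symm (x : ℝ) :
    HasDerivAt expAddSelfOrderIso.symm (exp (expAddSelfOrderIso.symm x) + 1)⁻¹ x :=
  ((hasDerivAt_exp _).add (hasDerivAt_id _)).of_local_left_inverse
    expAddSelfOrderIso.symm.continuous.continuousAt (by positivity)
    (Eventually.of_forall fun y =>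
      (expAddSelfOrderIso_apply _).symm.trans (expAddSelfOrderIso.apply_symm_apply y))

lemma eq_exp_expAddSelfOrderIso_symm_of_mul_exp_eq {w x : ℝ} (h : w * exp w = exp x) :
    w = exp (expAddSelfOrderIso.symm x) := by
  have hw : 0 < w := pos_of_mul_pos_left (h ▸ exp_pos x) (exp_pos w).le
  have hlog : expAddSelfOrderIso (log w) = x := by
    have := congrArg log h
    rw [log_mul hw.ne' (exp_pos w).ne', log_exp, log_exp] at this
    rw [expAddSelfOrderIso_apply, exp_log hw]
    linarith
  rw [← hlog, OrderIso.symm_apply_apply, exp_log hw]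

variable {W : ℝ → ℝ}

lemma pos_of_mul_exp_eq_exp (hW : ∀ x, W (exp x) * exp (W (exp x)) = exp x) (x : ℝ) :
    0 < W (exp x) :=
  (eq_exp_expAddSelfOrderIso_symm_of_mul_exp_eq (hW x)).symm ▸ exp_pos _

lemma hasDerivAt_comp_exp_of_mul_exp_eq_exp (hW : ∀ x, W (exp x) * exp (W (exp x)) = exp x)
    (x : ℝ) :
    HasDerivAt (fun s => W (exp s)) (W (exp x) / (1 + W (exp x))) x := by
  have hWexp : (fun s => W (exp s)) = fun s => exp (expAddSelfOrderIso.symm s) :=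
    funext fun s => eq_exp_expAddSelfOrderIso_symm_of_mul_exp_eq (hW s)
  rw [hWexp, eq_exp_expAddSelfOrderIso_symm_of_mul_exp_eq (hW x), div_eq_mul_inv, add_comm]
  exact (hasDerivAt_expAddSelfOrderIso_symm x).exp

end Real

lemma HasDerivAt.div_one_add {g : ℝ → ℝ} {g' x : ℝ} (hg : HasDerivAt g g' x)
    (hx : 1 + g x ≠ 0) :
    HasDerivAt (fun s => g s / (1 + g s)) (g' / (1 + g x) ^ 2) x :=
  (hg.div (hg.const_add 1) hx).congr_deriv (by ring)

theorem stmt_19_general (C p q F₀ : ℝ)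
    (hF₀ : F₀ ∈ Set.Ico (0:ℝ) 1)
    (W : ℝ → ℝ) (hW : ∀ z : ℝ, 0 ≤ z → 0 ≤ W z ∧ W z * Real.exp (W z) = z) :
    (∀ r : ℝ,
      HasDerivAt
        (fun s : ℝ => F₀ + (1 - F₀) *
          (W (Real.exp (p + q * F₀ + s - (C + 1))) /
            (1 + W (Real.exp (p + q * F₀ + s - (C + 1))))))
        ((1 - F₀) * W (Real.exp (p + q * F₀ + r - (C + 1))) /
          (1 + W (Real.exp (p + q * F₀ + r - (C + 1)))) ^ 3) r ∧
      0 < (1 - F₀) * W (Real.exp (p + q * F₀ + r - (C + 1))) /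
          (1 + W (Real.exp (p + q * F₀ + r - (C + 1)))) ^ 3) ∧
    StrictMono
      (fun r : ℝ => F₀ + (1 - F₀) *
        (W (Real.exp (p + q * F₀ + r - (C + 1))) /
          (1 + W (Real.exp (p + q * F₀ + r - (C + 1)))))) ∧
    (∀ r : ℝ, 0 < r →
      F₀ + (1 - F₀) *
        (W (Real.exp (p + q * F₀ - (C + 1))) /
          (1 + W (Real.exp (p + q * F₀ - (C + 1))))) <
      F₀ + (1 - F₀) *
        (W (Real.exp (p + q * F₀ + r - (C + 1))) /
          (1 + W (Real.exp (p + q * F₀ + r - (C + 1)))))) := by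
  have hWexp : ∀ x, W (exp x) * exp (W (exp x)) = exp x := fun x => (hW _ (exp_pos x).le).2
  set V : ℝ → ℝ := fun s => W (exp (p + q * F₀ + s - (C + 1))) with hV
  have hV_pos : ∀ r, 0 < V r := fun r => pos_of_mul_exp_eq_exp hWexp _
  have hV_deriv : ∀ r, HasDerivAt V (V r / (1 + V r)) r := fun r => by
    simpa [hV, Function.comp_def] using (hasDerivAt_comp_exp_of_mul_exp_eq_exp hWexp _).comp r
      (((hasDerivAt_id r).const_add (p + q * F₀)).sub_const (C + 1))
  have hF₁_deriv : ∀ r, HasDerivAt (fun s => F₀ + (1 - F₀) * (V s / (1 + V s)))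
      ((1 - F₀) * V r / (1 + V r) ^ 3) r := fun r => by
    have hV₁ : 0 < 1 + V r := by linarith [hV_pos r]
    refine (((hV_deriv r).div_one_add hV₁.ne').const_mul (1 - F₀)).const_add F₀
      |>.congr_deriv ?_
    field_simp
  have hF₁_deriv_pos : ∀ r, 0 < (1 - F₀) * V r / (1 + V r) ^ 3 := fun r => by
    have := hV_pos r
    have : 0 < 1 - F₀ := by linarith [hF₀.2]
    positivity
  have hF₁_mono : StrictMono fun s => F₀ + (1 - F₀) * (V s / (1 + V s)) :=
    strictMono_of_deriv_pos fun r => (hF₁_deriv r).deriv ▸ hF₁_deriv_pos r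
  refine ⟨fun r => ⟨hF₁_deriv r, hF₁_deriv_pos r⟩, hF₁_mono, fun r hr => ?_⟩
  simpa [hV] using hF₁_mono hr

/-- The equilibrium final adoption level
`F₁(r) = F₀ + (1-F₀)·W/(1+W)`, `W = W(e^{p+qF₀+r-(C+1)})`, is strictly increasing in the
rebate `r`, with derivative `(1-F₀)·W/(1+W)³ > 0` when `F₀ < 1`; in particular any
positive rebate yields strictly higher final adoption than no rebate. -/
theorem stmt_19 (C p q F₀ : ℝ) (hC : 0 ≤ C) (hp : 0 ≤ p) (hq : 0 ≤ q)
    (hF₀ : F₀ ∈ Set.Ico (0:ℝ) 1)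
    (W : ℝ → ℝ) (hW : ∀ z : ℝ, 0 ≤ z → 0 ≤ W z ∧ W z * Real.exp (W z) = z) :
    (∀ r : ℝ,
      HasDerivAt
        (fun s : ℝ => F₀ + (1 - F₀) *
          (W (Real.exp (p + q * F₀ + s - (C + 1))) /
            (1 + W (Real.exp (p + q * F₀ + s - (C + 1))))))
        ((1 - F₀) * W (Real.exp (p + q * F₀ + r - (C + 1))) /
          (1 + W (Real.exp (p + q * F₀ + r - (C + 1)))) ^ 3) r ∧
      0 < (1 - F₀) * W (Real.exp (p + q * F₀ + r - (C + 1))) /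
          (1 + W (Real.exp (p + q * F₀ + r - (C + 1)))) ^ 3) ∧
    StrictMono
      (fun r : ℝ => F₀ + (1 - F₀) *
        (W (Real.exp (p + q * F₀ + r - (C + 1))) /
          (1 + W (Real.exp (p + q * F₀ + r - (C + 1)))))) ∧
    (∀ r : ℝ, 0 < r →
      F₀ + (1 - F₀) *
        (W (Real.exp (p + q * F₀ - (C + 1))) /
          (1 + W (Real.exp (p + q * F₀ - (C + 1))))) <
      F₀ + (1 - F₀) *
        (W (Real.exp (p + q * F₀ + r - (C + 1))) /
          (1 + W (Real.exp (p + q * F₀ + r - (C + 1)))))) :=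
  stmt_19_general C p q F₀ hF₀ W hW
end
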